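/- Let m, n, p, q be natural numbers with m ≤ n. Let A be an m×n complex matrix, B an n×m complex matrix, and let H00, H01, H10, H11 be complex matrices of sizes p×p, p×q, q×p, q×q respectively. Then charpoly([[I_m ⊗ H00, A ⊗ H01], [B ⊗ H10, I_n ⊗ H11]]) · (charpoly(H00))^(n−m) = charpoly([[I_n ⊗ H00, B ⊗ H01, ], [A ⊗ H10, I_m ⊗ H11]]) · (charpoly(H11))^(n−m), where the first block matrix has size (m·p+n·q)×(m·p+n·q) and the second has size (n·p+m·q)×(n·p+m·q). -/

import Mathlib

/-!
The characteristic matrix of the first block matrix is `D - X * Y` with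
`D = diag(1_m ⊗ charmatrix H00, 1_n ⊗ charmatrix H11)`, `X = diag(A ⊗ 1, B ⊗ 1)` and
`Y = offdiag(1_n ⊗ H01, 1_m ⊗ H10)`; that of the second one is `D' - Y * X`, where `D'` is `D`
with `m` and `n` interchanged. Since `D * X = X * D'`, we have `D⁻¹ * X * Y = X * (D'⁻¹ * Y)`,
and Sylvester's identity `det (1 - X * Z) = det (1 - Z * X)` gives
`det (D - X * Y) * det D' = det D * det (D' - Y * X)`. The determinants of `D` and `D'` are
products of powers of the monic polynomials `charpoly H00` and `charpoly H11`, so this argument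
can be run in the fraction ring of `R[X]`.
-/

open Matrix Polynomial Kronecker

open scoped nonZeroDivisors

namespace Matrix

variable {R : Type*} [CommRing R] {ι κ : Type*} [Fintype ι] [DecidableEq ι] [Fintype κ]
  [DecidableEq κ]

theorem det_sub_mul_mul_det_of_isUnit {D : Matrix ι ι R} {D' : Matrix κ κ R}
    {X : Matrix ι κ R} (Y : Matrix κ ι R) (hD : IsUnit D.det) (hD' : IsUnit D'.det)
    (hX : D * X = X * D') :
    (D - X * Y).det * D'.det = D.det * (D' - Y * X).det := by
  have hX' : D⁻¹ * X = X * D'⁻¹ := by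
    calc D⁻¹ * X = D⁻¹ * (X * D') * D'⁻¹ := by
          rw [Matrix.mul_assoc, Matrix.mul_assoc, mul_nonsing_inv _ hD', Matrix.mul_one]
      _ = X * D'⁻¹ := by rw [← hX, ← Matrix.mul_assoc, nonsing_inv_mul _ hD, Matrix.one_mul]
  have hDXY : D - X * Y = D * (1 - X * (D'⁻¹ * Y)) := by
    rw [← Matrix.mul_assoc, ← hX', Matrix.mul_sub, Matrix.mul_one, ← Matrix.mul_assoc,
      ← Matrix.mul_assoc, mul_nonsing_inv _ hD, Matrix.one_mul]
  have hDYX : D' - Y * X = D' * (1 - D'⁻¹ * Y * X) := by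
    rw [Matrix.mul_sub, Matrix.mul_one, ← Matrix.mul_assoc, ← Matrix.mul_assoc,
      mul_nonsing_inv _ hD', Matrix.one_mul]
  rw [hDXY, hDYX, det_mul, det_mul, det_one_sub_mul_comm]
  ring

theorem det_sub_mul_mul_det_of_mem_nonZeroDivisors {D : Matrix ι ι R} {D' : Matrix κ κ R}
    {X : Matrix ι κ R} (Y : Matrix κ ι R) (hD : D.det ∈ R⁰) (hD' : D'.det ∈ R⁰)
    (hX : D * X = X * D') :
    (D - X * Y).det * D'.det = D.det * (D' - Y * X).det := by
  apply IsFractionRing.injective R (FractionRing R)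
  set f := algebraMap R (FractionRing R)
  have hunit {r : R} (hr : r ∈ R⁰) : IsUnit (f r) :=
    IsLocalization.map_units _ (⟨r, hr⟩ : R⁰)
  have := det_sub_mul_mul_det_of_isUnit (D := D.map f) (D' := D'.map f) (X := X.map f)
    (Y.map f) (f.map_det D ▸ hunit hD) (f.map_det D' ▸ hunit hD')
    (by rw [← Matrix.map_mul, hX, Matrix.map_mul])
  simpa only [map_mul, RingHom.map_det, RingHom.mapMatrix_apply, Matrix.map_sub f (map_sub f),
    Matrix.map_mul] using this

theorem map_kronecker {S l m n p : Type*} [CommRing S] (f : R →+* S) (A : Matrix l m R)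
    (B : Matrix n p R) : (A ⊗ₖ B).map f = A.map f ⊗ₖ B.map f := by
  ext; simp

variable {m n p q : Type*} [Fintype m] [Fintype n] [DecidableEq m] [DecidableEq n]
  [Fintype p] [Fintype q] [DecidableEq p] [DecidableEq q]

theorem charmatrix_one_kronecker (H : Matrix p p R) :
    charmatrix ((1 : Matrix m m R) ⊗ₖ H) = (1 : Matrix m m R[X]) ⊗ₖ charmatrix H := by
  ext ⟨i, a⟩ ⟨j, b⟩
  by_cases hij : i = j <;> by_cases hab : a = b <;> simp [hij, hab]

theorem fromBlocks_kronecker_one_mul_fromBlocks_zero (A : Matrix m n R)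
    (B : Matrix n m R) (P : Matrix p q R) (Q : Matrix q p R) :
    fromBlocks (A ⊗ₖ (1 : Matrix p p R)) 0 0 (B ⊗ₖ (1 : Matrix q q R)) *
        fromBlocks 0 ((1 : Matrix n n R) ⊗ₖ P) ((1 : Matrix m m R) ⊗ₖ Q) 0 =
      fromBlocks 0 (A ⊗ₖ P) (B ⊗ₖ Q) 0 := by
  simp [fromBlocks_multiply, ← mul_kronecker_mul]

theorem fromBlocks_zero_mul_fromBlocks_kronecker_one (A : Matrix m n R)
    (B : Matrix n m R) (P : Matrix p q R) (Q : Matrix q p R) :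
    fromBlocks 0 ((1 : Matrix n n R) ⊗ₖ P) ((1 : Matrix m m R) ⊗ₖ Q) 0 *
        fromBlocks (A ⊗ₖ (1 : Matrix p p R)) 0 0 (B ⊗ₖ (1 : Matrix q q R)) =
      fromBlocks 0 (B ⊗ₖ P) (A ⊗ₖ Q) 0 := by
  simp [fromBlocks_multiply, ← mul_kronecker_mul]

theorem fromBlocks_one_kronecker_mul_fromBlocks_kronecker_one (A : Matrix m n R) (B : Matrix n m R)
    (S : Matrix p p R) (T : Matrix q q R) :
    fromBlocks ((1 : Matrix m m R) ⊗ₖ S) 0 0 ((1 : Matrix n n R) ⊗ₖ T) *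
        fromBlocks (A ⊗ₖ (1 : Matrix p p R)) 0 0 (B ⊗ₖ (1 : Matrix q q R)) =
      fromBlocks (A ⊗ₖ (1 : Matrix p p R)) 0 0 (B ⊗ₖ (1 : Matrix q q R)) *
        fromBlocks ((1 : Matrix n n R) ⊗ₖ S) 0 0 ((1 : Matrix m m R) ⊗ₖ T) := by
  simp [fromBlocks_multiply, ← mul_kronecker_mul]

theorem det_fromBlocks_one_kronecker (S : Matrix p p R) (T : Matrix q q R) :
    (fromBlocks ((1 : Matrix m m R) ⊗ₖ S) 0 0 ((1 : Matrix n n R) ⊗ₖ T)).det =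
      S.det ^ Fintype.card m * T.det ^ Fintype.card n := by
  simp [det_fromBlocks_zero₂₁, det_kronecker]

theorem charmatrix_fromBlocks_one_kronecker (A : Matrix m n R) (B : Matrix n m R)
    (H00 : Matrix p p R) (H01 : Matrix p q R) (H10 : Matrix q p R) (H11 : Matrix q q R) :
    charmatrix (fromBlocks ((1 : Matrix m m R) ⊗ₖ H00) (A ⊗ₖ H01) (B ⊗ₖ H10)
        ((1 : Matrix n n R) ⊗ₖ H11)) =
      fromBlocks ((1 : Matrix m m R[X]) ⊗ₖ charmatrix H00) 0 0
          ((1 : Matrix n n R[X]) ⊗ₖ charmatrix H11) -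
        fromBlocks 0 (A.map C ⊗ₖ H01.map C) (B.map C ⊗ₖ H10.map C) 0 := by
  rw [charmatrix_fromBlocks, charmatrix_one_kronecker, charmatrix_one_kronecker, map_kronecker,
    map_kronecker, sub_eq_add_neg, fromBlocks_neg, fromBlocks_add]
  simp

theorem charpoly_fromBlocks_one_kronecker_mul (A : Matrix m n R) (B : Matrix n m R)
    (H00 : Matrix p p R) (H01 : Matrix p q R) (H10 : Matrix q p R) (H11 : Matrix q q R) :
    (fromBlocks ((1 : Matrix m m R) ⊗ₖ H00) (A ⊗ₖ H01) (B ⊗ₖ H10)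
        ((1 : Matrix n n R) ⊗ₖ H11)).charpoly *
      (H00.charpoly ^ Fintype.card n * H11.charpoly ^ Fintype.card m) =
    H00.charpoly ^ Fintype.card m * H11.charpoly ^ Fintype.card n *
      (fromBlocks ((1 : Matrix n n R) ⊗ₖ H00) (B ⊗ₖ H01) (A ⊗ₖ H10)
        ((1 : Matrix m m R) ⊗ₖ H11)).charpoly := by
  have hmem (i j : ℕ) : (charmatrix H00).det ^ i * (charmatrix H11).det ^ j ∈ R[X]⁰ :=
    ((H00.charpoly_monic.pow i).mul (H11.charpoly_monic.pow j)).mem_nonZeroDivisors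
  simp only [charpoly, charmatrix_fromBlocks_one_kronecker]
  rw [← fromBlocks_kronecker_one_mul_fromBlocks_zero (A.map C) (B.map C),
    ← fromBlocks_zero_mul_fromBlocks_kronecker_one (A.map C) (B.map C),
    ← det_fromBlocks_one_kronecker, ← det_fromBlocks_one_kronecker]
  refine det_sub_mul_mul_det_of_mem_nonZeroDivisors _ ?_ ?_
    (fromBlocks_one_kronecker_mul_fromBlocks_kronecker_one _ _ _ _)
  all_goals rw [det_fromBlocks_one_kronecker]; exact hmem _ _

end Matrix

theorem stmt5 (m n p q : ℕ) (hmn : m ≤ n)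
    (A : Matrix (Fin m) (Fin n) ℂ) (B : Matrix (Fin n) (Fin m) ℂ)
    (H00 : Matrix (Fin p) (Fin p) ℂ) (H01 : Matrix (Fin p) (Fin q) ℂ)
    (H10 : Matrix (Fin q) (Fin p) ℂ) (H11 : Matrix (Fin q) (Fin q) ℂ) :
    (Matrix.fromBlocks ((1 : Matrix (Fin m) (Fin m) ℂ) ⊗ₖ H00) (A ⊗ₖ H01)
        (B ⊗ₖ H10) ((1 : Matrix (Fin n) (Fin n) ℂ) ⊗ₖ H11)).charpoly *
      H00.charpoly ^ (n - m) =
    (Matrix.fromBlocks ((1 : Matrix (Fin n) (Fin n) ℂ) ⊗ₖ H00) (B ⊗ₖ H01)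
        (A ⊗ₖ H10) ((1 : Matrix (Fin m) (Fin m) ℂ) ⊗ₖ H11)).charpoly *
      H11.charpoly ^ (n - m) := by
  have h := charpoly_fromBlocks_one_kronecker_mul A B H00 H01 H10 H11
  simp only [Fintype.card_fin] at h
  obtain ⟨d, rfl⟩ := Nat.exists_eq_add_of_le hmn
  rw [Nat.add_sub_cancel_left]
  have hne : H00.charpoly ^ m * H11.charpoly ^ m ≠ 0 :=
    ((H00.charpoly_monic.pow m).mul (H11.charpoly_monic.pow m)).ne_zero
  apply mul_right_cancel₀ hne
  linear_combination h
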